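/- arXiv:2404.00410 — 3 statements merged into one kernel-verified Lean document; each statement's English description precedes it below -/
import Mathlib

section
/- Let p_l = (m₁, …, m_l) be any finite sequence of integers of length l, let t₁, t₂ be nonnegative integers, and let p be the concatenation of p_l with the number 2 repeated t₂ times followed by the number 1 repeated t₁ times. Then λ(p) = λ(p_l) − f(t₁, t₂, l), where f(t₁, t₂, l) = (t₂ − 1)² + (1/2)(t₁ − 1/2)² + t₁t₂ + l(2t₂ + t₁) − 9/8. Equivalently, λ(p) = λ(p_l) + 3t₂ + t₁ − (2l + t₂ + 1)t₂ − (2l + 2t₂ + t₁ + 1)t₁/2. -/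
/-! Shifting an entry `n` from position `j` to position `j + k` lowers its contribution
`n (n - 2j + 1) / 2` by exactly `k n`, so `λ` is additive up to a correction linear in the
second block, and a block of `t` equal entries `c` contributes `t c (c - t) / 2`. -/

/-- `λ(p) = (1/2)·Σ_{j=1}^k n_j·(n_j − 2j + 1)` for a finite sequence of integers. -/
def transLamZ (L : List ℤ) : ℚ :=
  (∑ j ∈ Finset.range L.length,
    (L.getD j 0 : ℚ) * ((L.getD j 0 : ℚ) - 2 * ((j : ℚ) + 1) + 1)) / 2

theorem transLamZ_append (L M : List ℤ) :
    transLamZ (L ++ M) = transLamZ L + transLamZ M - L.length * ((M.sum : ℤ) : ℚ) := by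
  have hprefix : ∀ j ∈ Finset.range L.length, (L ++ M).getD j 0 = L.getD j 0 :=
    fun j hj => List.getD_append _ _ _ _ (Finset.mem_range.mp hj)
  have hsuffix : ∀ j, (L ++ M).getD (L.length + j) 0 = M.getD j 0 := fun j => by
    rw [List.getD_append_right _ _ _ _ (Nat.le_add_right _ _), Nat.add_sub_cancel_left]
  have hsum : ((M.sum : ℤ) : ℚ) = ∑ j ∈ Finset.range M.length, (M.getD j 0 : ℚ) := by
    rw [Finset.sum_range, ← Fin.sum_univ_getElem M, Int.cast_sum]
    simp only [List.getD_eq_getElem _ _ (Fin.is_lt _)]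
  unfold transLamZ
  rw [List.length_append, Finset.sum_range_add,
    Finset.sum_congr rfl fun j hj => by rw [hprefix j hj], hsum, Finset.mul_sum]
  simp only [hsuffix]
  rw [add_div, add_sub_assoc]
  congr 1
  rw [Finset.sum_div, Finset.sum_div, ← Finset.sum_sub_distrib]
  refine Finset.sum_congr rfl fun j _ => ?_
  push_cast
  ring

theorem transLamZ_singleton (c : ℤ) : transLamZ [c] = c * (c - 1) / 2 := by
  rw [transLamZ, List.length_singleton, Finset.sum_range_one, List.getD_cons_zero]
  ring

theorem transLamZ_replicate (t : ℕ) (c : ℤ) :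
    transLamZ (List.replicate t c) = t * c * (c - t) / 2 := by
  induction t with
  | zero => simp [transLamZ]
  | succ t ih =>
    rw [List.replicate_succ', transLamZ_append, ih, transLamZ_singleton, List.length_replicate,
      List.sum_singleton]
    push_cast
    ring

theorem lam_append_twos_ones (pl : List ℤ) (t₁ t₂ : ℕ) :
    transLamZ (pl ++ List.replicate t₂ 2 ++ List.replicate t₁ 1) =
      transLamZ pl -
        (((t₂ : ℚ) - 1) ^ 2 + (1 / 2) * ((t₁ : ℚ) - 1 / 2) ^ 2 + (t₁ : ℚ) * (t₂ : ℚ)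
          + (pl.length : ℚ) * (2 * (t₂ : ℚ) + (t₁ : ℚ)) - 9 / 8) := by
  rw [transLamZ_append, transLamZ_append, transLamZ_replicate, transLamZ_replicate]
  simp only [List.length_append, List.length_replicate, List.sum_replicate, nsmul_eq_mul]
  push_cast
  ring
end

section
/- For every integer n ≥ 19 and every integer m with 0 ≤ m ≤ (n−1)/2 if n is odd, respectively 0 ≤ m ≤ (n−4)/2 if n is even, there exists a partition p of n such that λ(p) = m. -/
/-- `λ(p) = (1/2)·Σ_{j=1}^k n_j·(n_j − 2j + 1)` for a finite sequence of naturals. -/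
def transLam (L : List ℕ) : ℚ :=
  (∑ j ∈ Finset.range L.length,
    (L.getD j 0 : ℚ) * ((L.getD j 0 : ℚ) - 2 * ((j : ℚ) + 1) + 1)) / 2

/-- A partition of `n`: a nonincreasing list of positive integers summing to `n`. -/
def IsPartitionOf (n : ℕ) (L : List ℕ) : Prop :=
  L.Pairwise (· ≥ ·) ∧ (∀ x ∈ L, 0 < x) ∧ L.sum = n

/-!
`λ(p)` is the sum of the contents `j - i` of the cells `(i, j)` of the Young diagram of `p`.
Peeling off the diagonal hooks, a partition with Frobenius coordinates `(a₁ > a₂ > ⋯ | b₁ > b₂ > ⋯)`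
has size `Σ (aᵢ + bᵢ + 1)` and `λ = Σ (aᵢ (aᵢ + 1) - bᵢ (bᵢ + 1)) / 2`, and every pair of strictly
decreasing sequences of equal length occurs. So it suffices to choose two or three hooks for each
`(n, m)`: `(m | m - 1)` carries `λ = m`, and symmetric hooks `(c | c)`, which carry nothing, make up
the size. The coordinates must decrease strictly, which fails for `(m | m - 1), (r - m | r - m)`
when `n = 2r + 1` and `2m ∈ {r, r + 1}`; there `(m + 1 | m), (r - m - 2 | r - m - 2), (0 | 1)` works
once `r ≥ 9`. For `n = 2r` and `2m > r - 2` the hook `(k + 1 | k - 1)`, carrying `2k + 1`, takes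
over, and this is where `r ≥ 10` is needed.
-/

theorem sum_range_getD_eq_sum (L : List ℕ) :
    ∑ j ∈ Finset.range L.length, (L.getD j 0 : ℚ) = L.sum := by
  induction L with
  | nil => simp
  | cons x L ih =>
    rw [List.length_cons, Finset.sum_range_succ']
    simp only [List.getD_cons_succ, List.getD_cons_zero, ih, List.sum_cons, Nat.cast_add]
    ring

theorem transLam_nil : transLam [] = 0 := by simp [transLam]

theorem transLam_cons (x : ℕ) (L : List ℕ) :
    transLam (x :: L) = (x : ℚ) * (x - 1) / 2 + transLam L - L.sum := by
  rw [transLam, transLam, List.length_cons, Finset.sum_range_succ', ← sum_range_getD_eq_sum]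
  simp only [List.getD_cons_succ, List.getD_cons_zero]
  have shift : ∀ j ∈ Finset.range L.length,
      (L.getD j 0 : ℚ) * (L.getD j 0 - 2 * (((j + 1 : ℕ) : ℚ) + 1) + 1) =
        (L.getD j 0 : ℚ) * (L.getD j 0 - 2 * ((j : ℚ) + 1) + 1) - 2 * L.getD j 0 := by
    intro j _
    push_cast
    ring
  rw [Finset.sum_congr rfl shift, Finset.sum_sub_distrib, ← Finset.mul_sum]
  push_cast; ring

theorem transLam_append (A B : List ℕ) :
    transLam (A ++ B) = transLam A + transLam B - A.length * B.sum := by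
  induction A with
  | nil => simp [transLam_nil]
  | cons x A ih =>
    rw [List.cons_append, transLam_cons, transLam_cons, ih, List.sum_append, List.length_cons]
    push_cast; ring

theorem transLam_replicate_one (k : ℕ) : transLam (List.replicate k 1) = -(k * (k - 1) / 2) := by
  induction k with
  | zero => simp [transLam_nil]
  | succ k ih =>
    rw [List.replicate_succ, transLam_cons, ih, List.sum_replicate, smul_eq_mul, mul_one]
    push_cast; ring

theorem sum_map_add_one (L : List ℕ) : (L.map (· + 1)).sum = L.sum + L.length := by
  induction L with
  | nil => rfl
  | cons x L ih => simp only [List.map_cons, List.sum_cons, ih, List.length_cons]; ring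

theorem transLam_map_succ (L : List ℕ) :
    transLam (L.map (· + 1)) = transLam L + L.sum - L.length * (L.length - 1) / 2 := by
  induction L with
  | nil => simp [transLam_nil]
  | cons x L ih =>
    rw [List.map_cons, transLam_cons, transLam_cons, ih, sum_map_add_one, List.length_cons,
      List.sum_cons]
    push_cast; ring

def hookContent (a b : ℕ) : ℚ := ((a : ℚ) * (a + 1) - b * (b + 1)) / 2

/-- The diagram of `L` shifted one step down the diagonal and wrapped in a hook with arm `a` and
leg `b`. -/
def addHook (a b : ℕ) (L : List ℕ) : List ℕ :=
  (a + 1) :: (L.map (· + 1) ++ List.replicate (b - L.length) 1)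

theorem transLam_addHook (a : ℕ) {b : ℕ} {L : List ℕ} (hb : L.length ≤ b) :
    transLam (addHook a b L) = transLam L + hookContent a b := by
  obtain ⟨k, rfl⟩ : ∃ k, b = L.length + k := ⟨b - L.length, by omega⟩
  rw [addHook, transLam_cons, transLam_append, transLam_map_succ, transLam_replicate_one,
    Nat.add_sub_cancel_left, hookContent, List.sum_append, sum_map_add_one, List.length_map,
    List.sum_replicate, smul_eq_mul, mul_one]
  push_cast; ring

theorem length_addHook (a : ℕ) {b : ℕ} {L : List ℕ} (hb : L.length ≤ b) :
    (addHook a b L).length = b + 1 := by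
  simp only [addHook, List.length_cons, List.length_append, List.length_map,
    List.length_replicate]
  omega

theorem le_of_mem_addHook {a b x : ℕ} {L : List ℕ} (ha : ∀ y ∈ L, y ≤ a)
    (hx : x ∈ addHook a b L) : x ≤ a + 1 := by
  simp only [addHook, List.mem_cons, List.mem_append, List.mem_map, List.mem_replicate] at hx
  rcases hx with rfl | ⟨y, hy, rfl⟩ | ⟨-, rfl⟩
  · rfl
  · exact Nat.succ_le_succ (ha y hy)
  · omega

theorem isPartitionOf_addHook {n a b : ℕ} {L : List ℕ} (hL : IsPartitionOf n L)
    (ha : ∀ x ∈ L, x ≤ a) (hb : L.length ≤ b) :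
    IsPartitionOf (n + (a + b + 1)) (addHook a b L) := by
  obtain ⟨hsorted, hpos, hsum⟩ := hL
  refine ⟨?_, ?_, ?_⟩
  · rw [addHook, List.pairwise_cons, List.pairwise_append, List.pairwise_map]
    refine ⟨fun y hy => le_of_mem_addHook ha (List.mem_cons_of_mem _ hy), hsorted.imp (by omega),
      List.pairwise_replicate.2 (Or.inr le_rfl), ?_⟩
    simp only [List.mem_map, List.mem_replicate]
    rintro _ ⟨x, -, rfl⟩ _ ⟨-, rfl⟩
    omega
  · simp only [addHook, List.mem_cons, List.mem_append, List.mem_map, List.mem_replicate]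
    rintro _ (rfl | ⟨x, -, rfl⟩ | ⟨-, rfl⟩) <;> omega
  · rw [addHook, List.sum_cons, List.sum_append, sum_map_add_one, List.sum_replicate,
      smul_eq_mul, mul_one]
    omega

def ofFrobenius : List (ℕ × ℕ) → List ℕ
  | [] => []
  | (a, b) :: hs => addHook a b (ofFrobenius hs)

def IsFrobeniusChain (hs : List (ℕ × ℕ)) : Prop :=
  hs.IsChain fun p q => q.1 < p.1 ∧ q.2 < p.2

theorem ofFrobenius_le_and_length_le :
    ∀ {a b : ℕ} {hs : List (ℕ × ℕ)}, IsFrobeniusChain ((a, b) :: hs) →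
    (∀ x ∈ ofFrobenius hs, x ≤ a) ∧ (ofFrobenius hs).length ≤ b
  | _, _, [], _ => ⟨fun _ hx => absurd hx List.not_mem_nil, Nat.zero_le _⟩
  | _, _, (_, _) :: _, h =>
    have ⟨⟨ha, hb⟩, h'⟩ := List.isChain_cons_cons.1 h
    have ⟨fa, fb⟩ := ofFrobenius_le_and_length_le h'
    ⟨fun _ hx => (le_of_mem_addHook fa hx).trans ha, (length_addHook _ fb).trans_le hb⟩

theorem ofFrobenius_spec : ∀ {hs : List (ℕ × ℕ)}, IsFrobeniusChain hs →
    IsPartitionOf (hs.map fun p => p.1 + p.2 + 1).sum (ofFrobenius hs) ∧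
      transLam (ofFrobenius hs) = (hs.map fun p => hookContent p.1 p.2).sum
  | [], _ => ⟨⟨List.Pairwise.nil, fun _ hx => absurd hx List.not_mem_nil, rfl⟩, transLam_nil⟩
  | (a, b) :: hs, h => by
    obtain ⟨fa, fb⟩ := ofFrobenius_le_and_length_le h
    obtain ⟨hp, hc⟩ := ofFrobenius_spec (List.IsChain.of_cons h)
    rw [List.map_cons, List.map_cons, List.sum_cons, List.sum_cons, add_comm,
      add_comm (hookContent _ _)]
    exact ⟨isPartitionOf_addHook hp fa fb, hc ▸ transLam_addHook a fb⟩

theorem exists_partition_of_frobenius (hs : List (ℕ × ℕ)) (h : IsFrobeniusChain hs) {n : ℕ}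
    {m : ℚ} (hn : (hs.map fun p => p.1 + p.2 + 1).sum = n)
    (hm : (hs.map fun p => hookContent p.1 p.2).sum = m) :
    ∃ L, IsPartitionOf n L ∧ transLam L = m :=
  hn ▸ hm ▸ ⟨_, ofFrobenius_spec h⟩

theorem exists_partition_two_mul_add_one {r m : ℕ} (hr : 9 ≤ r) (hm : m ≤ r) :
    ∃ L, IsPartitionOf (2 * r + 1) L ∧ transLam L = m := by
  rcases Nat.eq_zero_or_pos m with rfl | hm0
  · exact exists_partition_of_frobenius [(r, r)] (by simp [IsFrobeniusChain]) (by simp; ring)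
      (by simp [hookContent])
  by_cases hsmall : 2 * m < r
  · obtain ⟨k, g, rfl, rfl⟩ : ∃ k g, m = k + 1 ∧ r = m + g := ⟨m - 1, r - m, by omega, by omega⟩
    exact exists_partition_of_frobenius [(g, g), (k + 1, k)] (by simp [IsFrobeniusChain]; omega)
      (by simp; ring) (by simp [hookContent]; ring)
  by_cases hmid : 2 * m ≤ r + 1
  · obtain ⟨g, rfl⟩ : ∃ g, r = m + g + 2 := ⟨r - m - 2, by omega⟩
    exact exists_partition_of_frobenius [(m + 1, m), (g, g), (0, 1)]
      (by simp [IsFrobeniusChain]; omega) (by simp; ring) (by simp [hookContent]; ring)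
  · obtain ⟨k, g, rfl, rfl⟩ : ∃ k g, m = k + 1 ∧ r = m + g := ⟨m - 1, r - m, by omega, by omega⟩
    exact exists_partition_of_frobenius [(k + 1, k), (g, g)] (by simp [IsFrobeniusChain]; omega)
      (by simp; ring) (by simp [hookContent]; ring)

theorem exists_partition_two_mul {r m : ℕ} (hr : 10 ≤ r) (hm : m + 2 ≤ r) :
    ∃ L, IsPartitionOf (2 * r) L ∧ transLam L = m := by
  rcases Nat.lt_or_ge m 2 with hlt | hge
  · obtain rfl | rfl : m = 0 ∨ m = 1 := by omega
    · obtain ⟨g, rfl⟩ : ∃ g, r = g + 1 := ⟨r - 1, by omega⟩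
      exact exists_partition_of_frobenius [(g, g), (0, 0)] (by simp [IsFrobeniusChain]; omega)
        (by simp; ring) (by simp [hookContent])
    · obtain ⟨g, rfl⟩ : ∃ g, r = g + 4 := ⟨r - 4, by omega⟩
      exact exists_partition_of_frobenius [(g, g), (2, 2), (1, 0)]
        (by simp [IsFrobeniusChain]; omega) (by simp; ring) (by norm_num [hookContent])
  by_cases hsmall : 2 * m + 2 ≤ r
  · obtain ⟨k, g, rfl, rfl⟩ : ∃ k g, m = k + 1 ∧ r = m + 1 + g :=
      ⟨m - 1, r - m - 1, by omega, by omega⟩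
    exact exists_partition_of_frobenius [(g, g), (k + 1, k), (0, 0)]
      (by simp [IsFrobeniusChain]; omega) (by simp; ring) (by simp [hookContent]; ring)
  obtain ⟨k, rfl | rfl⟩ := Nat.even_or_odd' m
  · obtain ⟨j, c, rfl, rfl⟩ : ∃ j c, k = j + 3 ∧ r = c + j + 4 :=
      ⟨k - 3, r - k - 1, by omega, by omega⟩
    exact exists_partition_of_frobenius [(c, c), (j + 3, j + 1), (1, 0)]
      (by simp [IsFrobeniusChain]; omega) (by simp; ring) (by simp [hookContent]; ring)
  · obtain ⟨j, c, rfl, rfl⟩ : ∃ j c, k = j + 1 ∧ r = c + j + 2 :=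
      ⟨k - 1, r - k - 1, by omega, by omega⟩
    exact exists_partition_of_frobenius [(c, c), (j + 2, j)]
      (by simp [IsFrobeniusChain]; omega) (by simp; ring) (by simp [hookContent]; ring)

theorem segment_S1_in_spectrum (n : ℕ) (hn : 19 ≤ n) (m : ℕ)
    (hodd : Odd n → 2 * m ≤ n - 1) (heven : Even n → 2 * m ≤ n - 4) :
    ∃ L : List ℕ, IsPartitionOf n L ∧ transLam L = (m : ℚ) := by
  obtain ⟨r, rfl | rfl⟩ := Nat.even_or_odd' n
  · have := heven (even_two_mul r)
    exact exists_partition_two_mul (by omega) (by omega)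
  · have := hodd (odd_two_mul_add_one r)
    exact exists_partition_two_mul_add_one (by omega) (by omega)
end

section
/- Let n ≥ 11 be odd and let m be an odd integer with (n+3)/2 ≤ m ≤ n−4. Then the sequence consisting of (m+3)/2, then (n+2−m)/2, then 3, then the number 2 repeated (n−4−m)/2 times, then the number 1 repeated m − (n+3)/2 times, is a partition of n and its value λ equals m. -/
theorem transLam_append_singleton (L : List ℕ) (c : ℕ) :
    transLam (L ++ [c]) = transLam L + c * (c - 2 * L.length - 1) / 2 := by
  unfold transLam
  rw [List.length_append, List.length_singleton, Finset.sum_range_succ,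
    Finset.sum_congr rfl fun j hj => by rw [List.getD_append _ _ _ _ (Finset.mem_range.mp hj)]]
  simp only [List.getD_eq_getElem?_getD, List.getElem?_append_right le_rfl, Nat.sub_self,
    List.getElem?_cons_zero, Option.getD_some]
  ring

theorem transLam_append_replicate (L : List ℕ) (c k : ℕ) :
    transLam (L ++ List.replicate k c) = transLam L + k * c * (c - 2 * L.length - k) / 2 := by
  induction k with
  | zero => simp
  | succ k ih =>
    rw [List.replicate_succ', ← List.append_assoc, transLam_append_singleton, ih]
    simp only [List.length_append, List.length_replicate]
    push_cast
    ring

theorem transLam_witness (r s : ℕ) :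
    transLam ([r + s + 5, r + 3, 3] ++ List.replicate r 2 ++ List.replicate s 1) =
      (2 * r + 2 * s + 7 : ℕ) := by
  have hhead : [r + s + 5, r + 3, 3] =
      [] ++ List.replicate 1 (r + s + 5) ++ List.replicate 1 (r + 3) ++ List.replicate 1 3 := rfl
  rw [hhead]
  simp only [transLam_append_replicate, transLam_nil, List.length_append, List.length_replicate,
    List.length_nil]
  push_cast
  ring

theorem isPartitionOf_witness (r s : ℕ) :
    IsPartitionOf (4 * r + 2 * s + 11)
      ([r + s + 5, r + 3, 3] ++ List.replicate r 2 ++ List.replicate s 1) := by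
  refine ⟨?_, ?_, ?_⟩
  · simp only [List.pairwise_append, List.pairwise_cons, List.mem_replicate, List.mem_append,
      List.mem_cons, List.pairwise_replicate, List.not_mem_nil]
    grind
  · grind
  · simp only [List.sum_append, List.sum_replicate, List.sum_cons, List.sum_nil, smul_eq_mul]
    omega

theorem case_odd_n_odd_lambda_general (n m : ℕ) (hnodd : Odd n) (hmodd : Odd m)
    (h1 : n + 3 ≤ 2 * m) (h2 : m ≤ n - 4) :
    IsPartitionOf n
      ([(m + 3) / 2, (n + 2 - m) / 2, 3] ++ List.replicate ((n - 4 - m) / 2) 2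
        ++ List.replicate (m - (n + 3) / 2) 1) ∧
    transLam
      ([(m + 3) / 2, (n + 2 - m) / 2, 3] ++ List.replicate ((n - 4 - m) / 2) 2
        ++ List.replicate (m - (n + 3) / 2) 1) = (m : ℚ) := by
  obtain ⟨a, ha⟩ := hnodd
  obtain ⟨b, hb⟩ := hmodd
  obtain ⟨r, s, rfl, rfl⟩ : ∃ r s, n = 4 * r + 2 * s + 11 ∧ m = 2 * r + 2 * s + 7 :=
    ⟨a - b - 2, 2 * b - a - 1, by omega, by omega⟩
  have e1 : (2 * r + 2 * s + 7 + 3) / 2 = r + s + 5 := by omega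
  have e2 : (4 * r + 2 * s + 11 + 2 - (2 * r + 2 * s + 7)) / 2 = r + 3 := by omega
  have e3 : (4 * r + 2 * s + 11 - 4 - (2 * r + 2 * s + 7)) / 2 = r := by omega
  have e4 : 2 * r + 2 * s + 7 - (4 * r + 2 * s + 11 + 3) / 2 = s := by omega
  rw [e1, e2, e3, e4]
  exact ⟨isPartitionOf_witness r s, transLam_witness r s⟩

theorem case_odd_n_odd_lambda (n m : ℕ) (hn : 11 ≤ n) (hnodd : Odd n) (hmodd : Odd m)
    (h1 : n + 3 ≤ 2 * m) (h2 : m ≤ n - 4) :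
    IsPartitionOf n
      ([(m + 3) / 2, (n + 2 - m) / 2, 3] ++ List.replicate ((n - 4 - m) / 2) 2
        ++ List.replicate (m - (n + 3) / 2) 1) ∧
    transLam
      ([(m + 3) / 2, (n + 2 - m) / 2, 3] ++ List.replicate ((n - 4 - m) / 2) 2
        ++ List.replicate (m - (n + 3) / 2) 1) = (m : ℚ) :=
  case_odd_n_odd_lambda_general n m hnodd hmodd h1 h2
end
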